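/- Let A be a real m×m matrix, B ∈ ℝ^m a column vector, C ∈ ℝ^m a row vector (identified with c ∈ ℝ^m), D ∈ ℝ, and ε > 0. Suppose the matrices (P, L, J), with P an m×m symmetric positive definite matrix, L ∈ ℝ^{p×m} and J ∈ ℝ^p, satisfy the ε-KYP conditions for (A, B, C, D): PA + AᵀP = −LᵀL − (ε/2)P, PB = Cᵀ − LᵀJ, JᵀJ = 2D. Let u : ℝ → ℝ be a function and let x : ℝ → ℝ^m be differentiable with x'(t) = A x(t) + B u(t) for all t, and set y(t) = C x(t) + D u(t) and V(t) = (1/2) x(t)ᵀ P x(t). Then for all t, V'(t) = −(ε/2) V(t) − (1/2)‖L x(t) + J u(t)‖² + u(t) y(t). -/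

import Mathlib

open Matrix

/-!
Along a trajectory, `V' = xᵀ P (A x + B u)` because `P` is symmetric. The first KYP condition
rewrites the drift part `xᵀ P A x = ½ xᵀ (P A + Aᵀ P) x`, the second the input part `xᵀ P B`, and
the third turns the cross terms into `u y`; what remains is a polynomial identity in `x` and `u`.
-/

theorem Matrix.IsSymm.dotProduct_mulVec_comm {R n : Type*} [CommSemiring R] [Fintype n]
    {M : Matrix n n R} (hM : M.IsSymm) (v w : n → R) : v ⬝ᵥ M *ᵥ w = w ⬝ᵥ M *ᵥ v := by
  rw [dotProduct_mulVec, ← mulVec_transpose, hM.eq, dotProduct_comm]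

theorem Matrix.IsSymm.dotProduct_mul_add_transpose_mul_mulVec {R n : Type*} [CommSemiring R]
    [Fintype n] {P : Matrix n n R} (hP : P.IsSymm) (A : Matrix n n R) (x : n → R) :
    x ⬝ᵥ (P * A + Aᵀ * P) *ᵥ x = 2 * (x ⬝ᵥ P *ᵥ A *ᵥ x) := by
  rw [add_mulVec, dotProduct_add, ← mulVec_mulVec, ← mulVec_mulVec, dotProduct_mulVec x Aᵀ,
    vecMul_transpose, hP.dotProduct_mulVec_comm (A *ᵥ x), two_mul]

section Calculus

variable {𝕜 ι : Type*} [NontriviallyNormedField 𝕜] [Fintype ι] {t : 𝕜}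

theorem HasDerivAt.dotProduct {f g : 𝕜 → ι → 𝕜} {f' g' : ι → 𝕜}
    (hf : HasDerivAt f f' t) (hg : HasDerivAt g g' t) :
    HasDerivAt (fun s => f s ⬝ᵥ g s) (f' ⬝ᵥ g t + f t ⬝ᵥ g') t := by
  have := HasDerivAt.fun_sum (u := Finset.univ) fun i _ =>
    (hasDerivAt_pi.mp hf i).fun_mul (hasDerivAt_pi.mp hg i)
  rw [Finset.sum_add_distrib] at this
  exact this

theorem HasDerivAt.mulVec {κ : Type*} [Fintype κ] (M : Matrix κ ι 𝕜) {f : 𝕜 → ι → 𝕜}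
    {f' : ι → 𝕜} (hf : HasDerivAt f f' t) :
    HasDerivAt (fun s => M *ᵥ f s) (M *ᵥ f') t :=
  hasDerivAt_pi.mpr fun i => by
    have := (hasDerivAt_const t (M i)).dotProduct hf
    rw [zero_dotProduct, zero_add] at this
    exact this

theorem HasDerivAt.dotProduct_mulVec_self {M : Matrix ι ι 𝕜} (hM : M.IsSymm) {f : 𝕜 → ι → 𝕜}
    {f' : ι → 𝕜} (hf : HasDerivAt f f' t) :
    HasDerivAt (fun s => f s ⬝ᵥ M *ᵥ f s) (2 * (f t ⬝ᵥ M *ᵥ f')) t := by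
  convert hf.dotProduct (hf.mulVec M) using 1
  rw [hM.dotProduct_mulVec_comm, two_mul]

end Calculus

section KYP

variable {n q : Type*} [Fintype n] [Fintype q]
  {A P : Matrix n n ℝ} {B C : n → ℝ} {D ε : ℝ} {L : Matrix q n ℝ} {J : q → ℝ}

theorem kyp_supply_identity (hP : P.IsSymm) (hKYP1 : P * A + Aᵀ * P = -(Lᵀ * L) - (ε / 2) • P)
    (hKYP2 : P *ᵥ B = C - Lᵀ *ᵥ J) (hKYP3 : J ⬝ᵥ J = 2 * D) (x : n → ℝ) (u : ℝ) :
    x ⬝ᵥ P *ᵥ (A *ᵥ x + u • B) =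
      -(ε / 2) * ((1 / 2) * (x ⬝ᵥ P *ᵥ x)) - (1 / 2) * ((L *ᵥ x + u • J) ⬝ᵥ (L *ᵥ x + u • J))
        + u * (C ⬝ᵥ x + D * u) := by
  have hdrift : 2 * (x ⬝ᵥ P *ᵥ A *ᵥ x) = -(L *ᵥ x ⬝ᵥ L *ᵥ x) - ε / 2 * (x ⬝ᵥ P *ᵥ x) := by
    rw [← hP.dotProduct_mul_add_transpose_mul_mulVec, hKYP1, sub_mulVec, neg_mulVec,
      ← mulVec_mulVec, smul_mulVec, dotProduct_sub, dotProduct_neg, dotProduct_smul,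
      dotProduct_mulVec x Lᵀ, vecMul_transpose, smul_eq_mul]
  have hinput : x ⬝ᵥ P *ᵥ B = C ⬝ᵥ x - L *ᵥ x ⬝ᵥ J := by
    rw [hKYP2, dotProduct_sub, dotProduct_mulVec x Lᵀ, vecMul_transpose, dotProduct_comm x]
  simp only [mulVec_add, mulVec_smul, dotProduct_add, add_dotProduct, dotProduct_smul,
    smul_dotProduct, smul_eq_mul, hinput, hKYP3, dotProduct_comm J]
  linear_combination (1 / 2) * hdrift

end KYP

theorem dissipation_identity_general {m p : ℕ}
    (A : Matrix (Fin m) (Fin m) ℝ) (B : Fin m → ℝ) (C : Fin m → ℝ) (D : ℝ)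
    (ε : ℝ)
    (P : Matrix (Fin m) (Fin m) ℝ) (hP : P.PosDef)
    (L : Matrix (Fin p) (Fin m) ℝ) (J : Fin p → ℝ)
    (hKYP1 : P * A + Aᵀ * P = -(Lᵀ * L) - (ε / 2) • P)
    (hKYP2 : P.mulVec B = C - Lᵀ.mulVec J)
    (hKYP3 : J ⬝ᵥ J = 2 * D)
    (u : ℝ → ℝ) (x : ℝ → Fin m → ℝ)
    (hx : ∀ t, HasDerivAt x (A.mulVec (x t) + u t • B) t)
    (y : ℝ → ℝ) (hy : ∀ t, y t = C ⬝ᵥ x t + D * u t)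
    (V : ℝ → ℝ) (hV : ∀ t, V t = (1 / 2) * (x t ⬝ᵥ P.mulVec (x t))) :
    ∀ t, HasDerivAt V
      (-(ε / 2) * V t
        - (1 / 2) * ((L.mulVec (x t) + u t • J) ⬝ᵥ (L.mulVec (x t) + u t • J))
        + u t * y t) t := by
  have hPsymm : P.IsSymm := isHermitian_iff_isSymm.mp hP.isHermitian
  intro t
  rw [hV t, hy t, ← kyp_supply_identity hPsymm hKYP1 hKYP2 hKYP3, funext hV]
  have hQ := ((hx t).dotProduct_mulVec_self hPsymm).const_mul (1 / 2)
  rwa [← mul_assoc, one_div_mul_cancel two_ne_zero, one_mul] at hQ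

/-- The dissipation identity underlying the generalized passivity lemma:
given matrices `(P, L, J)` satisfying the ε-KYP conditions for `(A, B, C, D)`,
the storage function `V(t) = (1/2) x(t)ᵀ P x(t)` along any trajectory of
`x' = A x + B u`, with output `y = C x + D u`, satisfies
`V' = -(ε/2) V - (1/2)‖L x + J u‖² + u y`. -/
theorem dissipation_identity {m p : ℕ}
    (A : Matrix (Fin m) (Fin m) ℝ) (B : Fin m → ℝ) (C : Fin m → ℝ) (D : ℝ)
    (ε : ℝ) (hε : 0 < ε)
    (P : Matrix (Fin m) (Fin m) ℝ) (hP : P.PosDef)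
    (L : Matrix (Fin p) (Fin m) ℝ) (J : Fin p → ℝ)
    (hKYP1 : P * A + Aᵀ * P = -(Lᵀ * L) - (ε / 2) • P)
    (hKYP2 : P.mulVec B = C - Lᵀ.mulVec J)
    (hKYP3 : J ⬝ᵥ J = 2 * D)
    (u : ℝ → ℝ) (x : ℝ → Fin m → ℝ)
    (hx : ∀ t, HasDerivAt x (A.mulVec (x t) + u t • B) t)
    (y : ℝ → ℝ) (hy : ∀ t, y t = C ⬝ᵥ x t + D * u t)
    (V : ℝ → ℝ) (hV : ∀ t, V t = (1 / 2) * (x t ⬝ᵥ P.mulVec (x t))) :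
    ∀ t, HasDerivAt V
      (-(ε / 2) * V t
        - (1 / 2) * ((L.mulVec (x t) + u t • J) ⬝ᵥ (L.mulVec (x t) + u t • J))
        + u t * y t) t :=
  dissipation_identity_general A B C D ε P hP L J hKYP1 hKYP2 hKYP3 u x hx y hy V hV
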